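/- arXiv:1404.6333 — 2 statements merged into one kernel-verified Lean document; each statement's English description precedes it below -/
import Mathlib

section
/- In a recollement situation (i_*, j*) as in BBD with weight structures on D_Z and D_U, suppose f* -type functors are to preserve non-positivity and f^!-type functors non-negativity. Define D_{w≤0} = {M : i* M ∈ (D_Z)_{w≤0} and j* M ∈ (D_U)_{w≤0}} and D_{w≥0} = {M : i^! M ∈ (D_Z)_{w≥0} and j^! M = j* M ∈ (D_U)_{w≥0}}. If weight structures can be glued (Bondarko), the resulting D_{w≤0} is generated under extensions, shifts [n] for n ≤ 0, and direct summands by j_!((D_U)_{w≤0}) and i_*((D_Z)_{w≤0}). -/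
open CategoryTheory Limits Pretriangulated

/-- A weight structure on a triangulated category, following Bondarko:
a pair of full subcategories (given by predicates on objects) `le0 = C_{w≤0}` and
`ge0 = C_{w≥0}`, closed under direct summands, with the shift-monotonicity conditions
`C_{w≤0} ⊆ C_{w≤0}[1]` and `C_{w≥0}[1] ⊆ C_{w≥0}`, orthogonality
`Hom(X, Y) = 0` for `X ∈ C_{w≤0}`, `Y ∈ C_{w≥0}[1]`, and weight decomposition triangles. -/
structure WeightStructure (C : Type*) [Category C] [Preadditive C] [HasZeroObject C]
    [HasShift C ℤ] [∀ n : ℤ, (CategoryTheory.shiftFunctor C n).Additive]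
    [Pretriangulated C] where
  le0 : C → Prop
  ge0 : C → Prop
  le0_summand : ∀ ⦃X Y : C⦄ (i : X ⟶ Y) (r : Y ⟶ X), i ≫ r = 𝟙 X → le0 Y → le0 X
  ge0_summand : ∀ ⦃X Y : C⦄ (i : X ⟶ Y) (r : Y ⟶ X), i ≫ r = 𝟙 X → ge0 Y → ge0 X
  le0_shift : ∀ ⦃X : C⦄, le0 X → le0 (X⟦(-1 : ℤ)⟧)
  ge0_shift : ∀ ⦃X : C⦄, ge0 X → ge0 (X⟦(1 : ℤ)⟧)
  orth : ∀ ⦃X Y : C⦄, le0 X → ge0 Y → ∀ f : X ⟶ Y⟦(1 : ℤ)⟧, f = 0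
  decomp : ∀ X : C, ∃ (A B : C) (_ : le0 A) (_ : ge0 B)
    (f : A ⟶ X) (g : X ⟶ B⟦(1 : ℤ)⟧) (h : B⟦(1 : ℤ)⟧ ⟶ A⟦(1 : ℤ)⟧),
    Triangle.mk f g h ∈ distTriang C


/-- The closure of a class of objects under isomorphisms, non-positive shifts `[n]`
(`n ≤ 0`), extensions (distinguished triangles), and direct summands. -/
inductive NegGen {C : Type*} [Category C] [Preadditive C] [HasZeroObject C] [HasShift C ℤ]
    [∀ n : ℤ, (CategoryTheory.shiftFunctor C n).Additive] [Pretriangulated C]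
    (S : Set C) : C → Prop
  | of {X : C} : X ∈ S → NegGen S X
  | iso {X Y : C} : (X ≅ Y) → NegGen S X → NegGen S Y
  | shiftNeg {X : C} (n : ℤ) : n ≤ 0 → NegGen S X → NegGen S (X⟦n⟧)
  | ext {X Y Z : C} (f : X ⟶ Y) (g : Y ⟶ Z) (h : Z ⟶ X⟦(1 : ℤ)⟧) :
      (Triangle.mk f g h ∈ distTriang C) → NegGen S X → NegGen S Z → NegGen S Y
  | summand {X Y : C} (i : X ⟶ Y) (r : Y ⟶ X) : i ≫ r = 𝟙 X → NegGen S Y → NegGen S X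

/-!
Every `M` with `i^*M` and `j^*M` of weight `≤ 0` is an extension of `i_*i^*M` by `j_!j^*M`
(the recollement triangle), which gives one inclusion. Conversely, `j_!U` and `i_*Z` lie in
`D_{w≤0}` because `i^*j_! = 0`, `j^*i_* = 0` and `j^*j_! ≅ id`, `i^*i_* ≅ id`; and `D_{w≤0}`, being
the left orthogonal of `D_{w≥0}[1]` (by the weight decompositions), is closed under extensions,
summands and non-positive shifts.
-/

namespace WeightStructure

variable {C : Type*} [Category C] [Preadditive C] [HasZeroObject C] [HasShift C ℤ]
  [∀ n : ℤ, (CategoryTheory.shiftFunctor C n).Additive] [Pretriangulated C]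
  (w : WeightStructure C)

lemma le0_of_iso {X Y : C} (e : X ≅ Y) (h : w.le0 X) : w.le0 Y :=
  w.le0_summand e.inv e.hom e.inv_hom_id h

lemma le0_of_isZero {X : C} (hX : IsZero X) : w.le0 X := by
  obtain ⟨A, -, hA, -⟩ := w.decomp X
  exact w.le0_summand (0 : X ⟶ A) 0 (hX.eq_of_src _ _) hA

lemma le0_shift_of_nonpos {X : C} (h : w.le0 X) {n : ℤ} (hn : n ≤ 0) : w.le0 (X⟦n⟧) := by
  obtain ⟨k, rfl⟩ : ∃ k : ℕ, n = -k := ⟨(-n).toNat, by omega⟩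
  induction k with
  | zero => exact w.le0_of_iso ((shiftFunctorZero' C _ (by simp)).app X).symm h
  | succ k ih =>
    exact w.le0_of_iso ((shiftFunctorAdd' C (-(k : ℤ)) (-1) _ (by push_cast; ring)).app X).symm
      (w.le0_shift (ih (by omega)))

lemma le0_iff_forall_hom_eq_zero (Y : C) :
    w.le0 Y ↔ ∀ B : C, w.ge0 B → ∀ f : Y ⟶ B⟦(1 : ℤ)⟧, f = 0 := by
  refine ⟨fun h _ hB f => w.orth h hB f, fun h => ?_⟩
  obtain ⟨A, B, hA, hB, f, g, δ, hT⟩ := w.decomp Y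
  obtain ⟨s, hs⟩ := Triangle.coyoneda_exact₂ _ hT (𝟙 Y) ((Category.id_comp g).trans (h B hB g))
  exact w.le0_summand s f hs.symm hA

lemma le0_of_distTriang {X Y Z : C} (f : X ⟶ Y) (g : Y ⟶ Z) (h : Z ⟶ X⟦(1 : ℤ)⟧)
    (hT : Triangle.mk f g h ∈ distTriang C) (hX : w.le0 X) (hZ : w.le0 Z) : w.le0 Y := by
  refine (w.le0_iff_forall_hom_eq_zero Y).2 fun B hB φ => ?_
  obtain ⟨ψ, rfl⟩ := Triangle.yoneda_exact₂ _ hT φ (w.orth hX hB (f ≫ φ))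
  exact (congrArg _ (w.orth hZ hB ψ)).trans comp_zero

lemma le0_of_negGen {S : Set C} (hS : ∀ X ∈ S, w.le0 X) {X : C} (hX : NegGen S X) :
    w.le0 X := by
  induction hX with
  | of hX => exact hS _ hX
  | iso e _ ih => exact w.le0_of_iso e ih
  | shiftNeg n hn _ ih => exact w.le0_shift_of_nonpos ih hn
  | ext f g h hT _ _ ihX ihZ => exact w.le0_of_distTriang f g h hT ihX ihZ
  | summand i r hir _ ih => exact w.le0_summand i r hir ih

end WeightStructure

lemma CategoryTheory.Adjunction.isZero_obj_of_isZero_right {C D : Type*} [Category C]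
    [Category D] [HasZeroMorphisms D] {F : C ⥤ D} {G : D ⥤ C} (adj : F ⊣ G)
    (hG : ∀ Y, IsZero (G.obj Y)) (X : C) : IsZero (F.obj X) :=
  (IsZero.iff_id_eq_zero _).2 <| (adj.homEquiv _ _).injective <| (hG _).eq_of_tgt _ _

/-- Bondarko's gluing of weight structures along a recollement `D_Z → D ← D_U`:
the non-positive part `D_{w≤0} = {M : i^*M ∈ (D_Z)_{w≤0}, j^*M ∈ (D_U)_{w≤0}}` of the
glued weight structure is generated, under extensions, shifts `[n]` for `n ≤ 0`,
isomorphisms and direct summands, by `j_!((D_U)_{w≤0})` and `i_*((D_Z)_{w≤0})`. -/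
theorem glued_weightStructure_negative_part_generated
    {D DZ DU : Type*}
    [Category D] [Preadditive D] [HasZeroObject D] [HasShift D ℤ]
    [∀ n : ℤ, (CategoryTheory.shiftFunctor D n).Additive] [Pretriangulated D]
    [Category DZ] [Preadditive DZ] [HasZeroObject DZ] [HasShift DZ ℤ]
    [∀ n : ℤ, (CategoryTheory.shiftFunctor DZ n).Additive] [Pretriangulated DZ]
    [Category DU] [Preadditive DU] [HasZeroObject DU] [HasShift DU ℤ]
    [∀ n : ℤ, (CategoryTheory.shiftFunctor DU n).Additive] [Pretriangulated DU]
    (iSt : DZ ⥤ D) (iPull : D ⥤ DZ) (iShk : D ⥤ DZ)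
    (jPull : D ⥤ DU) (jL : DU ⥤ D) (jR : DU ⥤ D)
    (adj₁ : iPull ⊣ iSt) (adj₂ : iSt ⊣ iShk)
    (adj₃ : jL ⊣ jPull) (adj₄ : jPull ⊣ jR)
    [iSt.Full] [iSt.Faithful] [jL.Full] [jL.Faithful] [jR.Full] [jR.Faithful]
    (hji : ∀ Z : DZ, IsZero (jPull.obj (iSt.obj Z)))
    (htri₁ : ∀ M : D, ∃ δ : iSt.obj (iPull.obj M) ⟶ (jL.obj (jPull.obj M))⟦(1 : ℤ)⟧,
      Triangle.mk (adj₃.counit.app M) (adj₁.unit.app M) δ ∈ distTriang D)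
    (htri₂ : ∀ M : D, ∃ δ : jR.obj (jPull.obj M) ⟶ (iSt.obj (iShk.obj M))⟦(1 : ℤ)⟧,
      Triangle.mk (adj₂.counit.app M) (adj₄.unit.app M) δ ∈ distTriang D)
    (wZ : WeightStructure DZ) (wU : WeightStructure DU)
    (w : WeightStructure D)
    (hglue_le : ∀ M : D, w.le0 M ↔ (wZ.le0 (iPull.obj M) ∧ wU.le0 (jPull.obj M)))
    (hglue_ge : ∀ M : D, w.ge0 M ↔ (wZ.ge0 (iShk.obj M) ∧ wU.ge0 (jPull.obj M))) :
    ∀ M : D, w.le0 M ↔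
      NegGen ({X : D | ∃ U : DU, wU.le0 U ∧ Nonempty (X ≅ jL.obj U)} ∪
        {X : D | ∃ Z : DZ, wZ.le0 Z ∧ Nonempty (X ≅ iSt.obj Z)}) M := by
  intro M
  refine ⟨fun hM => ?_, w.le0_of_negGen ?_⟩
  · obtain ⟨hZ, hU⟩ := (hglue_le M).1 hM
    obtain ⟨δ, hT⟩ := htri₁ M
    exact NegGen.ext _ _ _ hT (NegGen.of (Or.inl ⟨_, hU, ⟨Iso.refl _⟩⟩))
      (NegGen.of (Or.inr ⟨_, hZ, ⟨Iso.refl _⟩⟩))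
  rintro X (⟨U, hU, ⟨e⟩⟩ | ⟨Z, hZ, ⟨e⟩⟩) <;> refine w.le0_of_iso e.symm ((hglue_le _).2 ⟨?_, ?_⟩)
  · exact wZ.le0_of_isZero ((adj₃.comp adj₁).isZero_obj_of_isZero_right hji U)
  · exact wU.le0_of_iso (asIso (adj₃.unit.app U)) hU
  · exact wZ.le0_of_iso (asIso (adj₁.counit.app Z)).symm hZ
  · exact wU.le0_of_isZero (hji Z)
end

section
/- Two weight structures on an idempotent-complete triangulated category C that have the same heart are equal, provided the heart generates C as a triangulated category (every object is obtained from heart objects by shifts and cones, up to direct summands). -/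
open CategoryTheory Limits Pretriangulated

/-- The closure of a family of objects under isomorphisms, shifts, cones of
distinguished triangles, and direct summands: "generation as a triangulated
category, up to direct summands". -/
inductive TriaGenS {C : Type*} [Category C] [Preadditive C] [HasZeroObject C] [HasShift C ℤ]
    [∀ n : ℤ, (CategoryTheory.shiftFunctor C n).Additive] [Pretriangulated C]
    (S : Set C) : C → Prop
  | of {X : C} : X ∈ S → TriaGenS S X
  | iso {X Y : C} : (X ≅ Y) → TriaGenS S X → TriaGenS S Y
  | shift {X : C} (n : ℤ) : TriaGenS S X → TriaGenS S (X⟦n⟧)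
  | cone {X Y Z : C} (f : X ⟶ Y) (g : Y ⟶ Z) (h : Z ⟶ X⟦(1 : ℤ)⟧) :
      (Triangle.mk f g h ∈ distTriang C) → TriaGenS S X → TriaGenS S Y → TriaGenS S Z
  | summand {X Y : C} (i : X ⟶ Y) (r : Y ⟶ X) : i ≫ r = 𝟙 X → TriaGenS S Y → TriaGenS S X

/-!
In any weight structure, `C_{w≤0}` is the left orthogonal of `C_{w≥0}⟦1⟧` and `C_{w≥0}` the right
orthogonal of `C_{w≤0}⟦-1⟧`, so it suffices to compare the classes `C_{w≤0}`. An object built from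
the heart has no maps to `C_{w₂≥0}⟦n⟧` once `n` is large. If moreover it lies in `C_{w₁≤0}`, a
downward induction on `n` (decompose the target with respect to `w₂`; the first term lies in the
common heart) brings this vanishing down to `n = 1`, i.e. the object lies in `C_{w₂≤0}`.
-/

namespace WeightStructure

variable {C : Type*} [Category C] [Preadditive C] [HasZeroObject C] [HasShift C ℤ]
  [∀ n : ℤ, (CategoryTheory.shiftFunctor C n).Additive] [Pretriangulated C]
  (w : WeightStructure C)

lemma ge0_of_iso {X Y : C} (e : X ≅ Y) (h : w.ge0 X) : w.ge0 Y :=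
  w.ge0_summand e.inv e.hom e.inv_hom_id h

lemma ge0_shift_of_nonneg {X : C} (h : w.ge0 X) {n : ℤ} (hn : 0 ≤ n) : w.ge0 (X⟦n⟧) := by
  induction n, hn using Int.leInduction with
  | base => exact w.ge0_of_iso ((shiftFunctorZero C ℤ).app X).symm h
  | succ n _ ih =>
    exact w.ge0_of_iso ((shiftFunctorAdd' C n 1 (n + 1) rfl).app X).symm (w.ge0_shift ih)

lemma ge0_of_forall_le0 {X : C} (h : ∀ Z : C, w.le0 Z → ∀ f : Z ⟶ X⟦(1 : ℤ)⟧, f = 0) :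
    w.ge0 X := by
  obtain ⟨A, B, hA, hB, f, g, δ, hT⟩ := w.decomp (X⟦(1 : ℤ)⟧)
  let T := (CategoryTheory.shiftFunctor (Triangle C) (-1 : ℤ)).obj (Triangle.mk f g δ)
  have hT₁ : T.mor₁ = 0 := by
    change (-1 : ℤ).negOnePow • f⟦(-1 : ℤ)⟧' = 0
    rw [h A hA f, Functor.map_zero, smul_zero]
  obtain ⟨r, hr⟩ := Triangle.yoneda_exact₂ T (Triangle.shift_distinguished _ hT (-1)) (𝟙 _)
    (by rw [hT₁, zero_comp])
  let e : ∀ Y : C, (Y⟦(1 : ℤ)⟧)⟦(-1 : ℤ)⟧ ≅ Y := fun Y =>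
    (shiftFunctorCompIsoId C (1 : ℤ) (-1) (by ring)).app Y
  exact w.ge0_of_iso (e X) (w.ge0_summand T.mor₂ r hr.symm (w.ge0_of_iso (e B).symm hB))

lemma ge0_of_distTriang {T : Triangle C} (hT : T ∈ distTriang C)
    (h₁ : w.ge0 T.obj₁) (h₃ : w.ge0 T.obj₃) : w.ge0 T.obj₂ := by
  refine w.ge0_of_forall_le0 fun Z hZ f => ?_
  let T' := (CategoryTheory.shiftFunctor (Triangle C) (1 : ℤ)).obj T
  obtain ⟨b, rfl⟩ := Triangle.coyoneda_exact₂ T' (Triangle.shift_distinguished _ hT 1) f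
    (w.orth hZ h₃ _)
  rw [w.orth hZ h₁ b]
  exact zero_comp

def OrthShiftedGe0 (X : C) (n : ℤ) : Prop :=
  ∀ Z : C, w.ge0 Z → ∀ f : X ⟶ Z⟦n⟧, f = 0

lemma orthShiftedGe0_of_le0 {X : C} (hX : w.le0 X) {n : ℤ} (hn : 1 ≤ n) :
    w.OrthShiftedGe0 X n := by
  intro Z hZ f
  let e : Z⟦n⟧ ≅ (Z⟦n - 1⟧)⟦(1 : ℤ)⟧ := (shiftFunctorAdd' C (n - 1) 1 n (by ring)).app Z
  simpa using w.orth hX (w.ge0_shift_of_nonneg hZ (by omega : 0 ≤ n - 1)) (f ≫ e.hom) =≫ e.inv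

lemma le0_of_orthShiftedGe0 {X : C} (h : w.OrthShiftedGe0 X 1) : w.le0 X := by
  obtain ⟨A, B, hA, hB, f, g, _, hT⟩ := w.decomp X
  obtain ⟨s, hs⟩ := Triangle.coyoneda_exact₂ _ hT (𝟙 X) ((Category.id_comp g).trans (h B hB g))
  exact w.le0_summand s f hs.symm hA

lemma orthShiftedGe0_of_retract {X Y : C} {i : X ⟶ Y} {r : Y ⟶ X} (hir : i ≫ r = 𝟙 X) {n : ℤ}
    (h : w.OrthShiftedGe0 Y n) : w.OrthShiftedGe0 X n := by
  intro Z hZ f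
  rw [← Category.id_comp f, ← hir, Category.assoc, h Z hZ (r ≫ f), comp_zero]

lemma orthShiftedGe0_shift {X : C} {n : ℤ} (k : ℤ) (h : w.OrthShiftedGe0 X (n - k)) :
    w.OrthShiftedGe0 (X⟦k⟧) n := by
  intro Z hZ f
  let e₁ : (X⟦k⟧)⟦-k⟧ ≅ X := (shiftFunctorCompIsoId C k (-k) (by ring)).app X
  let e₂ : (Z⟦n⟧)⟦-k⟧ ≅ Z⟦n - k⟧ := ((shiftFunctorAdd' C n (-k) (n - k) (by ring)).app Z).symm
  have hf : f⟦-k⟧' = 0 := by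
    rw [← cancel_epi e₁.inv, ← cancel_mono e₂.hom, comp_zero, zero_comp, Category.assoc]
    exact h Z hZ _
  exact (shiftFunctor C (-k)).map_injective (hf.trans (Functor.map_zero _ _ _).symm)

lemma orthShiftedGe0_of_distTriang {T : Triangle C} (hT : T ∈ distTriang C) {n : ℤ}
    (h₁ : w.OrthShiftedGe0 (T.obj₁⟦(1 : ℤ)⟧) n) (h₂ : w.OrthShiftedGe0 T.obj₂ n) :
    w.OrthShiftedGe0 T.obj₃ n := by
  intro Z hZ f
  obtain ⟨g, rfl⟩ := Triangle.yoneda_exact₂ _ (rot_of_distTriang _ hT) f (h₂ Z hZ _)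
  rw [h₁ Z hZ g]
  exact comp_zero

def EventuallyOrthShiftedGe0 (X : C) : Prop :=
  ∃ N : ℤ, ∀ n ≥ N, w.OrthShiftedGe0 X n

lemma eventuallyOrthShiftedGe0_of_le0 {X : C} (hX : w.le0 X) : w.EventuallyOrthShiftedGe0 X :=
  ⟨1, fun _ hn => w.orthShiftedGe0_of_le0 hX hn⟩

lemma eventuallyOrthShiftedGe0_of_retract {X Y : C} {i : X ⟶ Y} {r : Y ⟶ X}
    (hir : i ≫ r = 𝟙 X) (h : w.EventuallyOrthShiftedGe0 Y) : w.EventuallyOrthShiftedGe0 X :=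
  let ⟨N, hN⟩ := h
  ⟨N, fun n hn => w.orthShiftedGe0_of_retract hir (hN n hn)⟩

lemma eventuallyOrthShiftedGe0_shift {X : C} (k : ℤ) (h : w.EventuallyOrthShiftedGe0 X) :
    w.EventuallyOrthShiftedGe0 (X⟦k⟧) :=
  let ⟨N, hN⟩ := h
  ⟨N + k, fun n hn => w.orthShiftedGe0_shift k (hN (n - k) (by omega))⟩

lemma eventuallyOrthShiftedGe0_of_distTriang {T : Triangle C} (hT : T ∈ distTriang C)
    (h₁ : w.EventuallyOrthShiftedGe0 T.obj₁) (h₂ : w.EventuallyOrthShiftedGe0 T.obj₂) :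
    w.EventuallyOrthShiftedGe0 T.obj₃ :=
  let ⟨N₁, hN₁⟩ := w.eventuallyOrthShiftedGe0_shift 1 h₁
  let ⟨N₂, hN₂⟩ := h₂
  ⟨max N₁ N₂, fun n hn => w.orthShiftedGe0_of_distTriang hT (hN₁ n (le_of_max_le_left hn))
    (hN₂ n (le_of_max_le_right hn))⟩

lemma eventuallyOrthShiftedGe0_of_triaGenS {S : Set C} (hS : ∀ Y ∈ S, w.le0 Y) {X : C}
    (hX : TriaGenS S X) : w.EventuallyOrthShiftedGe0 X := by
  induction hX with
  | of h => exact w.eventuallyOrthShiftedGe0_of_le0 (hS _ h)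
  | iso e _ ih => exact w.eventuallyOrthShiftedGe0_of_retract e.inv_hom_id ih
  | shift n _ ih => exact w.eventuallyOrthShiftedGe0_shift n ih
  | cone f g h hT _ _ ih₁ ih₂ => exact w.eventuallyOrthShiftedGe0_of_distTriang hT ih₁ ih₂
  | summand i r hir _ ih => exact w.eventuallyOrthShiftedGe0_of_retract hir ih

/-- In a weight decomposition `A → Z → B⟦1⟧` of `Z ∈ C_{w₂≥0}` for `w₂`, `A` lies in the heart of
`w₂`, hence in `C_{w₁≥0}`. A map `X ⟶ Z⟦n⟧` from `X ∈ C_{w₁≤0}` that vanishes on composing to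
`B⟦n + 1⟧` therefore factors through `A⟦n⟧`, and vanishes. -/
lemma orthShiftedGe0_of_orthShiftedGe0_add_one (w₁ w₂ : WeightStructure C)
    (hheart : ∀ A : C, w₂.le0 A → w₂.ge0 A → w₁.ge0 A) {X : C} (hX : w₁.le0 X) {n : ℤ}
    (hn : 1 ≤ n) (h : w₂.OrthShiftedGe0 X (n + 1)) : w₂.OrthShiftedGe0 X n := by
  intro Z hZ f
  obtain ⟨A, B, hA, hB, a, b, c, hT⟩ := w₂.decomp Z
  have hA' : w₂.ge0 A := w₂.ge0_of_distTriang (inv_rot_of_distTriang _ hT)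
    (w₂.ge0_of_iso ((shiftFunctorCompIsoId C (1 : ℤ) (-1) (by ring)).app B).symm hB) hZ
  let Tn := (CategoryTheory.shiftFunctor (Triangle C) n).obj (Triangle.mk a b c)
  let e : B⟦n + 1⟧ ≅ (B⟦(1 : ℤ)⟧)⟦n⟧ := (shiftFunctorAdd' C 1 n (n + 1) (by ring)).app B
  have hf : f ≫ Tn.mor₂ = 0 := by
    change (f ≫ Tn.mor₂ : X ⟶ (B⟦(1 : ℤ)⟧)⟦n⟧) = 0
    rw [← cancel_mono e.inv, zero_comp]
    exact h B hB _
  obtain ⟨g, rfl⟩ := Triangle.coyoneda_exact₂ Tn (Triangle.shift_distinguished _ hT n) f hf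
  rw [w₁.orthShiftedGe0_of_le0 hX hn A (hheart A hA hA') g]
  exact zero_comp

lemma le0_of_le0_of_eventuallyOrthShiftedGe0 (w₁ w₂ : WeightStructure C)
    (hheart : ∀ A : C, w₂.le0 A → w₂.ge0 A → w₁.ge0 A) {X : C} (hX : w₁.le0 X)
    (hV : w₂.EventuallyOrthShiftedGe0 X) : w₂.le0 X := by
  obtain ⟨N, hN⟩ := hV
  suffices ∀ n ≤ max N 1, 1 ≤ n → w₂.OrthShiftedGe0 X n from
    w₂.le0_of_orthShiftedGe0 (this 1 (le_max_right N 1) le_rfl)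
  intro n hn
  induction n, hn using Int.leInductionDown with
  | base => exact fun _ => hN _ (le_max_left N 1)
  | pred n _ ih =>
    exact fun hn => orthShiftedGe0_of_orthShiftedGe0_add_one w₁ w₂ hheart hX hn
      (by simpa using ih (by omega))

lemma ge0_iff_of_le0_iff {w₁ w₂ : WeightStructure C} (h : ∀ X : C, w₁.le0 X ↔ w₂.le0 X)
    (X : C) : w₁.ge0 X ↔ w₂.ge0 X :=
  ⟨fun h₁ => w₂.ge0_of_forall_le0 fun Z hZ f => w₁.orth ((h Z).2 hZ) h₁ f,
    fun h₂ => w₁.ge0_of_forall_le0 fun Z hZ f => w₂.orth ((h Z).1 hZ) h₂ f⟩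

end WeightStructure

/-- Bondarko's uniqueness: two weight structures on an idempotent-complete
triangulated category with the same heart coincide, provided this common heart
generates the category as a triangulated category up to direct summands. -/
theorem weightStructure_eq_of_heart_eq_of_heart_generates
    {C : Type*} [Category C] [Preadditive C] [HasZeroObject C] [HasShift C ℤ]
    [∀ n : ℤ, (CategoryTheory.shiftFunctor C n).Additive] [Pretriangulated C]
    [IsIdempotentComplete C]
    (w₁ w₂ : WeightStructure C)
    (hheart : ∀ X : C, (w₁.le0 X ∧ w₁.ge0 X) ↔ (w₂.le0 X ∧ w₂.ge0 X))
    (hgen : ∀ X : C, TriaGenS {Y : C | w₁.le0 Y ∧ w₁.ge0 Y} X) :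
    (∀ X : C, w₁.le0 X ↔ w₂.le0 X) ∧ (∀ X : C, w₁.ge0 X ↔ w₂.ge0 X) := by
  have hle : ∀ X : C, w₁.le0 X ↔ w₂.le0 X := fun X =>
    ⟨fun h₁ => w₁.le0_of_le0_of_eventuallyOrthShiftedGe0 w₂
        (fun A hA hA' => ((hheart A).2 ⟨hA, hA'⟩).2) h₁
        (w₂.eventuallyOrthShiftedGe0_of_triaGenS (fun Y hY => ((hheart Y).1 hY).1) (hgen X)),
      fun h₂ => w₂.le0_of_le0_of_eventuallyOrthShiftedGe0 w₁
        (fun A hA hA' => ((hheart A).1 ⟨hA, hA'⟩).2) h₂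
        (w₁.eventuallyOrthShiftedGe0_of_triaGenS (fun Y hY => hY.1) (hgen X))⟩
  exact ⟨hle, WeightStructure.ge0_iff_of_le0_iff hle⟩
end
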